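/- Let a < b and c < d be real numbers, let R = [a,b] × [c,d], let V : ℝ² → ℝ be continuous on R, let β ∈ ℝ and T > 0, and let ψ : ℝ² × ℝ → ℂ be smooth (infinitely differentiable) on a neighborhood of R × [0,T], with ψ(x,t) = 0 for all x ∈ ∂R and t ∈ [0,T], satisfying the Gross–Pitaevskii equation i·∂_t ψ(x,t) = -½·Δψ(x,t) + V(x)·ψ(x,t) + β·|ψ(x,t)|²·ψ(x,t) for all x ∈ R and t ∈ [0,T], where Δ acts in the spatial variables. Then the energy t ↦ E[ψ](t) = ∫_R ( ½·|∇ψ(x,t)|² + V(x)·|ψ(x,t)|² + (β/2)·|ψ(x,t)|⁴ ) dx is constant on [0,T], where ∇ψ is the spatial gradient. -/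

import Mathlib

open MeasureTheory Set

/-- Partial derivative in the first spatial variable (complex-valued). -/
noncomputable def pdxC (f : ℝ × ℝ → ℂ) (p : ℝ × ℝ) : ℂ :=
  deriv (fun x => f (x, p.2)) p.1

/-- Partial derivative in the second spatial variable (complex-valued). -/
noncomputable def pdyC (f : ℝ × ℝ → ℂ) (p : ℝ × ℝ) : ℂ :=
  deriv (fun y => f (p.1, y)) p.2

/-- The spatial Laplacian `Δf = ∂²f/∂x² + ∂²f/∂y²` (complex-valued). -/
noncomputable def lap2C (f : ℝ × ℝ → ℂ) (p : ℝ × ℝ) : ℂ :=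
  pdxC (pdxC f) p + pdyC (pdyC f) p

/-- The Gross–Pitaevskii energy of `ψ(·,t)` on the rectangle. -/
noncomputable def gpEnergy (a b c d : ℝ) (V : ℝ × ℝ → ℝ) (β : ℝ)
    (ψ : (ℝ × ℝ) × ℝ → ℂ) (t : ℝ) : ℝ :=
  ∫ p in Icc a b ×ˢ Icc c d,
    ((1 / 2) * (‖pdxC (fun q => ψ (q, t)) p‖ ^ 2 + ‖pdyC (fun q => ψ (q, t)) p‖ ^ 2)
      + V p * ‖ψ (p, t)‖ ^ 2 + (β / 2) * ‖ψ (p, t)‖ ^ 4)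

open Complex
open scoped ContDiff

section GPAux

variable {E : Type*} [NormedAddCommGroup E] [NormedSpace ℝ E]

lemma hasDerivAt_slice1 {F : (ℝ × ℝ) × ℝ → E} {z : (ℝ × ℝ) × ℝ}
    (h : DifferentiableAt ℝ F z) :
    HasDerivAt (fun x => F ((x, z.1.2), z.2)) (fderiv ℝ F z ((1, 0), 0)) z.1.1 := by
  have h1 : HasDerivAt (fun x : ℝ => ((x, z.1.2), z.2)) (((1 : ℝ), (0 : ℝ)), (0 : ℝ)) z.1.1 :=
    ((hasDerivAt_id _).prodMk (hasDerivAt_const _ _)).prodMk (hasDerivAt_const _ _)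
  exact h.hasFDerivAt.comp_hasDerivAt z.1.1 h1

lemma hasDerivAt_slice2 {F : (ℝ × ℝ) × ℝ → E} {z : (ℝ × ℝ) × ℝ}
    (h : DifferentiableAt ℝ F z) :
    HasDerivAt (fun y => F ((z.1.1, y), z.2)) (fderiv ℝ F z ((0, 1), 0)) z.1.2 := by
  have h1 : HasDerivAt (fun y : ℝ => ((z.1.1, y), z.2)) (((0 : ℝ), (1 : ℝ)), (0 : ℝ)) z.1.2 :=
    ((hasDerivAt_const _ _).prodMk (hasDerivAt_id _)).prodMk (hasDerivAt_const _ _)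
  exact h.hasFDerivAt.comp_hasDerivAt z.1.2 h1

lemma hasDerivAt_slicet {F : (ℝ × ℝ) × ℝ → E} {z : (ℝ × ℝ) × ℝ}
    (h : DifferentiableAt ℝ F z) :
    HasDerivAt (fun τ => F (z.1, τ)) (fderiv ℝ F z ((0, 0), 1)) z.2 := by
  have h1 : HasDerivAt (fun τ : ℝ => (z.1, τ)) ((((0 : ℝ), (0 : ℝ)), (1 : ℝ)) : (ℝ × ℝ) × ℝ) z.2 :=
    (hasDerivAt_const _ _).prodMk (hasDerivAt_id _)
  exact h.hasFDerivAt.comp_hasDerivAt z.2 h1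

lemma hasDerivAt_normSq {f : ℝ → ℂ} {f' : ℂ} {t : ℝ} (h : HasDerivAt f f' t) :
    HasDerivAt (fun s => ‖f s‖ ^ 2) (2 * ((starRingEnd ℂ) (f t) * f').re) t := by
  have hre : HasDerivAt (fun s => (f s).re) f'.re t :=
    (Complex.reCLM.hasFDerivAt.comp_hasDerivAt t h)
  have him : HasDerivAt (fun s => (f s).im) f'.im t :=
    (Complex.imCLM.hasFDerivAt.comp_hasDerivAt t h)
  have h2 : HasDerivAt (fun s => (f s).re ^ 2 + (f s).im ^ 2)
      (2 * (f t).re ^ 1 * f'.re + 2 * (f t).im ^ 1 * f'.im) t := (hre.pow 2).add (him.pow 2)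
  have heq : (fun s => ‖f s‖ ^ 2) = fun s => (f s).re ^ 2 + (f s).im ^ 2 := by
    funext s
    rw [Complex.sq_norm, Complex.normSq_apply]; ring
  rw [heq]
  convert h2 using 1
  simp [Complex.mul_re]; ring

/-- basis directions -/
abbrev ee1 : (ℝ × ℝ) × ℝ := ((1, 0), 0)
abbrev ee2 : (ℝ × ℝ) × ℝ := ((0, 1), 0)
abbrev eet : (ℝ × ℝ) × ℝ := ((0, 0), 1)

/-- directional derivative -/
noncomputable def dAp (ψ : (ℝ × ℝ) × ℝ → ℂ) (v z : (ℝ × ℝ) × ℝ) : ℂ := fderiv ℝ ψ z v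

variable {ψ : (ℝ × ℝ) × ℝ → ℂ} {U : Set ((ℝ × ℝ) × ℝ)}

lemma contDiffOn_dAp (hU : IsOpen U) (hψ : ContDiffOn ℝ ∞ ψ U) (v : (ℝ × ℝ) × ℝ) :
    ContDiffOn ℝ ∞ (dAp ψ v) U :=
  (((contDiffOn_infty_iff_fderiv_of_isOpen hU).mp hψ).2).clm_apply contDiffOn_const

lemma diffAt_of (hU : IsOpen U) {F : Type*} [NormedAddCommGroup F] [NormedSpace ℝ F]
    {f : (ℝ × ℝ) × ℝ → F} (hf : ContDiffOn ℝ ∞ f U)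
    {z : (ℝ × ℝ) × ℝ} (hz : z ∈ U) : DifferentiableAt ℝ f z :=
  (hf.differentiableOn (by simp) z hz).differentiableAt (hU.mem_nhds hz)

lemma dAp2_symm (hU : IsOpen U) (hψ : ContDiffOn ℝ ∞ ψ U) {z : (ℝ × ℝ) × ℝ}
    (hz : z ∈ U) (v w : (ℝ × ℝ) × ℝ) :
    fderiv ℝ (dAp ψ w) z v = fderiv ℝ (dAp ψ v) z w := by
  have hD : DifferentiableAt ℝ (fderiv ℝ ψ) z :=
    diffAt_of hU ((contDiffOn_infty_iff_fderiv_of_isOpen hU).mp hψ).2 hz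
  have h1 : ∀ u : (ℝ × ℝ) × ℝ, fderiv ℝ (dAp ψ u) z = (fderiv ℝ (fderiv ℝ ψ) z).flip u := by
    intro u
    have := fderiv_clm_apply (𝕜 := ℝ) hD (differentiableAt_const u)
    rw [show dAp ψ u = fun y => fderiv ℝ ψ y u from rfl]
    simpa using this
  have hsym := (hψ.contDiffAt (hU.mem_nhds hz)).isSymmSndFDerivAt (by simp; exact (WithTop.coe_le_coe.2 le_top : ((2:ℕ∞):ℕ∞ω) ≤ ((⊤:ℕ∞):ℕ∞ω)))
  rw [h1 w, h1 v]
  simp only [ContinuousLinearMap.flip_apply]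
  exact hsym v w

end GPAux

section GPAux2
variable {ψ : (ℝ × ℝ) × ℝ → ℂ} {U : Set ((ℝ × ℝ) × ℝ)}

/-- The energy density. -/
noncomputable def Gfun (V : ℝ × ℝ → ℝ) (β : ℝ) (ψ : (ℝ × ℝ) × ℝ → ℂ) (z : (ℝ × ℝ) × ℝ) : ℝ :=
  (1 / 2) * (‖dAp ψ ee1 z‖ ^ 2 + ‖dAp ψ ee2 z‖ ^ 2) + V z.1 * ‖ψ z‖ ^ 2 + (β / 2) * ‖ψ z‖ ^ 4

/-- Time derivative of the energy density. -/
noncomputable def Gtfun (V : ℝ × ℝ → ℝ) (β : ℝ) (ψ : (ℝ × ℝ) × ℝ → ℂ) (z : (ℝ × ℝ) × ℝ) : ℝ :=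
  ((starRingEnd ℂ) (dAp ψ ee1 z) * fderiv ℝ (dAp ψ ee1) z eet).re
    + ((starRingEnd ℂ) (dAp ψ ee2 z) * fderiv ℝ (dAp ψ ee2) z eet).re
    + 2 * (V z.1 + β * ‖ψ z‖ ^ 2) * ((starRingEnd ℂ) (ψ z) * dAp ψ eet z).re

lemma hasDerivAt_Gfun (hU : IsOpen U) (hψ : ContDiffOn ℝ ∞ ψ U) {z : (ℝ × ℝ) × ℝ}
    (hz : z ∈ U) (V : ℝ × ℝ → ℝ) (β : ℝ) :
    HasDerivAt (fun τ => Gfun V β ψ (z.1, τ)) (Gtfun V β ψ z) z.2 := by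
  have h1 : HasDerivAt (fun τ => dAp ψ ee1 (z.1, τ)) (fderiv ℝ (dAp ψ ee1) z eet) z.2 :=
    hasDerivAt_slicet (diffAt_of hU (contDiffOn_dAp hU hψ ee1) hz)
  have h2 : HasDerivAt (fun τ => dAp ψ ee2 (z.1, τ)) (fderiv ℝ (dAp ψ ee2) z eet) z.2 :=
    hasDerivAt_slicet (diffAt_of hU (contDiffOn_dAp hU hψ ee2) hz)
  have h0 : HasDerivAt (fun τ => ψ (z.1, τ)) (dAp ψ eet z) z.2 :=
    hasDerivAt_slicet (diffAt_of hU hψ hz)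
  have n1 := hasDerivAt_normSq h1
  have n2 := hasDerivAt_normSq h2
  have n0 := hasDerivAt_normSq h0
  have n4 : HasDerivAt (fun τ => ‖ψ (z.1, τ)‖ ^ 4)
      (2 * ‖ψ z‖ ^ 2 * (2 * ((starRingEnd ℂ) (ψ z) * dAp ψ eet z).re)) z.2 := by
    have h4 := (hasDerivAt_normSq h0).fun_pow 2
    have hfun : (fun τ => ‖ψ (z.1, τ)‖ ^ 4) = fun τ => (‖ψ (z.1, τ)‖ ^ 2) ^ 2 :=
      funext fun τ => by ring
    rw [hfun]
    simpa using h4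
  have hsum := (((n1.add n2).const_mul (1 / 2 : ℝ)).add (n0.const_mul (V z.1))).add
    (n4.const_mul (β / 2))
  refine hsum.congr_deriv ?_
  unfold Gtfun; ring
end GPAux2

/-- Conservation of energy for the time-dependent Gross–Pitaevskii equation on a
rectangle with homogeneous Dirichlet boundary condition. -/
theorem gp_energy_conservation
    (a b c d : ℝ) (hab : a < b) (hcd : c < d)
    (V : ℝ × ℝ → ℝ) (hV : ContinuousOn V (Icc a b ×ˢ Icc c d))
    (β T : ℝ) (hT : 0 < T)
    (ψ : (ℝ × ℝ) × ℝ → ℂ) (U : Set ((ℝ × ℝ) × ℝ)) (hU : IsOpen U)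
    (hRU : (Icc a b ×ˢ Icc c d) ×ˢ Icc 0 T ⊆ U)
    (hψ : ContDiffOn ℝ (⊤ : ℕ∞) ψ U)
    (hbd : ∀ p ∈ frontier (Icc a b ×ˢ Icc c d), ∀ t ∈ Icc (0:ℝ) T, ψ (p, t) = 0)
    (heq : ∀ p ∈ Icc a b ×ˢ Icc c d, ∀ t ∈ Icc (0:ℝ) T,
      Complex.I * deriv (fun τ => ψ (p, τ)) t
        = -(1 / 2 : ℂ) * lap2C (fun q => ψ (q, t)) p + (V p : ℂ) * ψ (p, t)
          + (β : ℂ) * (‖ψ (p, t)‖ ^ 2 : ℝ) * ψ (p, t)) :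
    ∀ t ∈ Icc (0:ℝ) T, gpEnergy a b c d V β ψ t = gpEnergy a b c d V β ψ 0 := by
  have hps : ContDiffOn ℝ ∞ ψ U := hψ.of_le (by simp)
  set R : Set (ℝ × ℝ) := Icc a b ×ˢ Icc c d with hRdef
  set K : Set ((ℝ × ℝ) × ℝ) := R ×ˢ Icc 0 T with hKdef
  have hKU : K ⊆ U := hRU
  have hRmeas : MeasurableSet R := measurableSet_Icc.prod measurableSet_Icc
  have hRcomp : IsCompact R := isCompact_Icc.prod isCompact_Icc
  have hRclosed : IsClosed R := isClosed_Icc.prod isClosed_Icc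
  have hKcomp : IsCompact K := hRcomp.prod isCompact_Icc
  have hmemU : ∀ p ∈ R, ∀ s ∈ Icc (0:ℝ) T, ((p, s) : (ℝ × ℝ) × ℝ) ∈ U :=
    fun p hp s hs => hKU ⟨hp, hs⟩
  -- continuity on K of smooth functions
  have hcK : ∀ {F : Type} [NormedAddCommGroup F] [NormedSpace ℝ F] (f : (ℝ × ℝ) × ℝ → F),
      ContDiffOn ℝ ∞ f U → ContinuousOn f K := fun f hf => hf.continuousOn.mono hKU
  set E' : ℝ → ℝ := fun s => ∫ p in R, Gfun V β ψ (p, s) with hE'def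
  -- Step 1 : gpEnergy agrees with E' on [0, T]
  have hgp : ∀ s ∈ Icc (0:ℝ) T, gpEnergy a b c d V β ψ s = E' s := by
    intro s hs
    unfold gpEnergy
    refine setIntegral_congr_fun hRmeas fun p hp => ?_
    have hz : ((p, s) : (ℝ × ℝ) × ℝ) ∈ U := hmemU p hp s hs
    have hx : pdxC (fun q => ψ (q, s)) p = dAp ψ ee1 (p, s) :=
      (hasDerivAt_slice1 (z := (p, s)) (diffAt_of hU hps hz)).deriv
    have hy : pdyC (fun q => ψ (q, s)) p = dAp ψ ee2 (p, s) :=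
      (hasDerivAt_slice2 (z := (p, s)) (diffAt_of hU hps hz)).deriv
    rw [hx, hy]
    rfl
  -- Step 2 : continuity of the energy density and its time derivative
  have hVK : ContinuousOn (fun z : (ℝ × ℝ) × ℝ => V z.1) K :=
    hV.comp continuous_fst.continuousOn (fun z hz => hz.1)
  have hGcont : ContinuousOn (Gfun V β ψ) K := by
    have hc0 := hcK ψ hps
    have hc1 := hcK _ (contDiffOn_dAp hU hps ee1)
    have hc2 := hcK _ (contDiffOn_dAp hU hps ee2)
    unfold Gfun
    exact ((continuousOn_const.mul ((hc1.norm.pow 2).add (hc2.norm.pow 2))).add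
      (hVK.mul (hc0.norm.pow 2))).add (continuousOn_const.mul (hc0.norm.pow 4))
  have hGtcont : ContinuousOn (Gtfun V β ψ) K := by
    have hc0 := hcK ψ hps
    have hc1 := hcK _ (contDiffOn_dAp hU hps ee1)
    have hc2 := hcK _ (contDiffOn_dAp hU hps ee2)
    have hct := hcK _ (contDiffOn_dAp hU hps eet)
    have hc1t := hcK _ (contDiffOn_dAp hU (contDiffOn_dAp hU hps ee1) eet)
    have hc2t := hcK _ (contDiffOn_dAp hU (contDiffOn_dAp hU hps ee2) eet)
    unfold Gtfun
    simp only [starRingEnd_apply]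
    exact ((Complex.continuous_re.comp_continuousOn (hc1.star.mul hc1t)).add
      (Complex.continuous_re.comp_continuousOn (hc2.star.mul hc2t))).add
      ((continuousOn_const.mul (hVK.add (continuousOn_const.mul (hc0.norm.pow 2)))).mul
        (Complex.continuous_re.comp_continuousOn (hc0.star.mul hct)))
  -- Step 3 : continuity of E' on [0, T]
  have hE'cont : ContinuousOn E' (Icc 0 T) := by
    obtain ⟨C, hC⟩ := hKcomp.exists_bound_of_continuousOn hGcont
    intro s hs
    rw [hE'def]
    apply continuousWithinAt_of_dominated (bound := fun _ => C)
    · filter_upwards [self_mem_nhdsWithin] with x hx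
      exact ((hGcont.comp ((continuous_id.prodMk continuous_const).continuousOn)
        (fun p (hp : p ∈ R) => ⟨hp, hx⟩)).aestronglyMeasurable hRmeas)
    · filter_upwards [self_mem_nhdsWithin] with x hx
      exact (ae_restrict_iff' hRmeas).2 (ae_of_all _ fun p hp => hC _ ⟨hp, hx⟩)
    · exact integrableOn_const hRcomp.measure_lt_top.ne
    · exact (ae_restrict_iff' hRmeas).2 (ae_of_all _ fun p hp =>
        (hGcont.comp ((continuous_const.prodMk continuous_id).continuousOn)
          (fun x (hx : x ∈ Icc (0:ℝ) T) => ⟨hp, hx⟩)) s hs)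
  -- Step 4 : differentiation under the integral sign
  have hE'deriv : ∀ t₀ ∈ Ioo (0:ℝ) T, HasDerivAt E' (∫ p in R, Gtfun V β ψ (p, t₀)) t₀ := by
    intro t₀ ht₀
    obtain ⟨C, hC⟩ := hKcomp.exists_bound_of_continuousOn hGtcont
    have hεpos : 0 < min t₀ (T - t₀) := lt_min ht₀.1 (sub_pos.2 ht₀.2)
    have hball : Metric.ball t₀ (min t₀ (T - t₀)) ⊆ Icc 0 T := by
      intro x hx
      rw [Real.ball_eq_Ioo] at hx
      have h1 := min_le_left t₀ (T - t₀)
      have h2 := min_le_right t₀ (T - t₀)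
      exact ⟨by linarith [hx.1], by linarith [hx.2]⟩
    have key := hasDerivAt_integral_of_dominated_loc_of_deriv_le (μ := volume.restrict R)
      (F := fun x p => Gfun V β ψ (p, x)) (F' := fun x p => Gtfun V β ψ (p, x))
      (x₀ := t₀) (bound := fun _ => C) (Metric.ball_mem_nhds t₀ hεpos)
      ?_ ?_ ?_ ?_ ?_ ?_
    · rw [hE'def]; exact key.2
    · filter_upwards [Metric.ball_mem_nhds t₀ hεpos] with x hx
      exact ((hGcont.comp ((continuous_id.prodMk continuous_const).continuousOn)
        (fun p (hp : p ∈ R) => ⟨hp, hball hx⟩)).aestronglyMeasurable hRmeas)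
    · exact ((hGcont.comp ((continuous_id.prodMk continuous_const).continuousOn)
        (fun p (hp : p ∈ R) => ⟨hp, Ioo_subset_Icc_self ht₀⟩))).integrableOn_compact hRcomp
    · exact ((hGtcont.comp ((continuous_id.prodMk continuous_const).continuousOn)
        (fun p (hp : p ∈ R) => ⟨hp, Ioo_subset_Icc_self ht₀⟩))).aestronglyMeasurable hRmeas
    · exact (ae_restrict_iff' hRmeas).2 (ae_of_all _ fun p hp x hx => hC _ ⟨hp, hball hx⟩)
    · exact integrableOn_const hRcomp.measure_lt_top.ne
    · exact (ae_restrict_iff' hRmeas).2 (ae_of_all _ fun p hp x hx =>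
        hasDerivAt_Gfun hU hps (hmemU p hp x (hball hx)) V β)
  -- Step 5 : the derivative vanishes (integration by parts + the PDE)
  have hIBP : ∀ t₀ ∈ Ioo (0:ℝ) T, (∫ p in R, Gtfun V β ψ (p, t₀)) = 0 := by
    intro t₀ ht₀
    have ht₀I : t₀ ∈ Icc (0:ℝ) T := Ioo_subset_Icc_self ht₀
    have hmem : ∀ p ∈ R, ((p, t₀) : (ℝ × ℝ) × ℝ) ∈ U := fun p hp => hmemU p hp t₀ ht₀I
    have hintR : interior R = Ioo a b ×ˢ Ioo c d := by
      rw [hRdef, interior_prod_eq, interior_Icc, interior_Icc]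
    -- frontier membership
    have hfr : ∀ p : ℝ × ℝ, p ∈ R → (p.1 = a ∨ p.1 = b ∨ p.2 = c ∨ p.2 = d) →
        p ∈ frontier R := by
      intro p hp hor
      rw [hRclosed.frontier_eq, hintR]
      refine ⟨hp, fun hmem' => ?_⟩
      obtain ⟨h1, h2⟩ := hmem'
      rcases hor with h | h | h | h
      · rw [h] at h1; exact lt_irrefl a h1.1
      · rw [h] at h1; exact lt_irrefl b h1.2
      · rw [h] at h2; exact lt_irrefl c h2.1
      · rw [h] at h2; exact lt_irrefl d h2.2
    -- time derivative vanishes on the frontier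
    have hbdt : ∀ p ∈ frontier R, dAp ψ eet (p, t₀) = 0 := by
      intro p hp
      have hpR : p ∈ R := by
        have h := frontier_subset_closure (s := R) hp
        rwa [hRclosed.closure_eq] at h
      have hz := hmem p hpR
      have hd : deriv (fun τ => ψ (p, τ)) t₀ = dAp ψ eet (p, t₀) :=
        (hasDerivAt_slicet (z := (p, t₀)) (diffAt_of hU hps hz)).deriv
      rw [← hd]
      have hev : (fun τ => ψ (p, τ)) =ᶠ[nhds t₀] (fun _ => (0:ℂ)) := by
        filter_upwards [isOpen_Ioo.mem_nhds ht₀] with τ hτ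
        exact hbd p hp τ (Ioo_subset_Icc_self hτ)
      rw [hev.deriv_eq, deriv_const]
    -- identification of the Laplacian
    have hlap : ∀ p ∈ R, lap2C (fun q => ψ (q, t₀)) p
        = dAp (dAp ψ ee1) ee1 (p, t₀) + dAp (dAp ψ ee2) ee2 (p, t₀) := by
      intro p hp
      have hz := hmem p hp
      have hevx : (fun x => pdxC (fun q' => ψ (q', t₀)) (x, p.2))
          =ᶠ[nhds p.1] (fun x => dAp ψ ee1 ((x, p.2), t₀)) := by
        have hopen : IsOpen {x : ℝ | (((x, p.2), t₀) : (ℝ × ℝ) × ℝ) ∈ U} :=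
          hU.preimage (by fun_prop)
        filter_upwards [hopen.mem_nhds (by exact hz)] with x hx
        exact (hasDerivAt_slice1 (z := ((x, p.2), t₀)) (diffAt_of hU hps hx)).deriv
      have hevy : (fun y => pdyC (fun q' => ψ (q', t₀)) (p.1, y))
          =ᶠ[nhds p.2] (fun y => dAp ψ ee2 ((p.1, y), t₀)) := by
        have hopen : IsOpen {y : ℝ | (((p.1, y), t₀) : (ℝ × ℝ) × ℝ) ∈ U} :=
          hU.preimage (by fun_prop)
        filter_upwards [hopen.mem_nhds (by exact hz)] with y hy
        exact (hasDerivAt_slice2 (z := ((p.1, y), t₀)) (diffAt_of hU hps hy)).deriv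
      have h2x : pdxC (pdxC (fun q' => ψ (q', t₀))) p = dAp (dAp ψ ee1) ee1 (p, t₀) := by
        show deriv (fun x => pdxC (fun q' => ψ (q', t₀)) (x, p.2)) p.1 = _
        rw [hevx.deriv_eq]
        exact (hasDerivAt_slice1 (z := (p, t₀)) (F := dAp ψ ee1)
          (diffAt_of hU (contDiffOn_dAp hU hps ee1) hz)).deriv
      have h2y : pdyC (pdyC (fun q' => ψ (q', t₀))) p = dAp (dAp ψ ee2) ee2 (p, t₀) := by
        show deriv (fun y => pdyC (fun q' => ψ (q', t₀)) (p.1, y)) p.2 = _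
        rw [hevy.deriv_eq]
        exact (hasDerivAt_slice2 (z := (p, t₀)) (F := dAp ψ ee2)
          (diffAt_of hU (contDiffOn_dAp hU hps ee2) hz)).deriv
      show pdxC (pdxC _) p + pdyC (pdyC _) p = _
      rw [h2x, h2y]
    -- the PDE in directional-derivative form
    have hpde : ∀ p ∈ R, (V p : ℂ) * ψ (p, t₀) + (β : ℂ) * (‖ψ (p, t₀)‖ ^ 2 : ℝ) * ψ (p, t₀)
        = Complex.I * dAp ψ eet (p, t₀)
          + (1 / 2 : ℂ) * (dAp (dAp ψ ee1) ee1 (p, t₀) + dAp (dAp ψ ee2) ee2 (p, t₀)) := by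
      intro p hp
      have h := heq p hp t₀ ht₀I
      rw [hlap p hp] at h
      have hd : deriv (fun τ => ψ (p, τ)) t₀ = dAp ψ eet (p, t₀) :=
        (hasDerivAt_slicet (z := (p, t₀)) (diffAt_of hU hps (hmem p hp))).deriv
      rw [hd] at h
      linear_combination -h
    -- slice derivatives as FDerivs
    have hsliceF : ∀ f : (ℝ × ℝ) × ℝ → ℂ, ContDiffOn ℝ ∞ f U → ∀ p : ℝ × ℝ,
        ((p, t₀) : (ℝ × ℝ) × ℝ) ∈ U → HasFDerivAt (fun q => f (q, t₀))
          ((fderiv ℝ f (p, t₀)).comp (ContinuousLinearMap.inl ℝ (ℝ × ℝ) ℝ)) p :=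
      fun f hf p hz =>
        (diffAt_of hU hf hz).hasFDerivAt.comp p (hasFDerivAt_prodMk_left p t₀)
    set conjL : ℂ →L[ℝ] ℂ := ((starL' ℝ : ℂ ≃L[ℝ] ℂ) : ℂ →L[ℝ] ℂ) with hconjL
    have hconjLa : ∀ w : ℂ, conjL w = star w := fun w => rfl
    set Fc : ℝ × ℝ → ℂ :=
      fun p => star (dAp ψ ee1 (p, t₀)) * dAp ψ eet (p, t₀) with hFcdef
    set Gc : ℝ × ℝ → ℂ :=
      fun p => star (dAp ψ ee2 (p, t₀)) * dAp ψ eet (p, t₀) with hGcdef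
    set Fc' : ℝ × ℝ → (ℝ × ℝ →L[ℝ] ℂ) := fun p =>
      star (dAp ψ ee1 (p, t₀)) •
          ((fderiv ℝ (dAp ψ eet) (p, t₀)).comp (ContinuousLinearMap.inl ℝ (ℝ × ℝ) ℝ))
        + dAp ψ eet (p, t₀) •
          (conjL.comp ((fderiv ℝ (dAp ψ ee1) (p, t₀)).comp
            (ContinuousLinearMap.inl ℝ (ℝ × ℝ) ℝ))) with hFc'def
    set Gc' : ℝ × ℝ → (ℝ × ℝ →L[ℝ] ℂ) := fun p =>
      star (dAp ψ ee2 (p, t₀)) •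
          ((fderiv ℝ (dAp ψ eet) (p, t₀)).comp (ContinuousLinearMap.inl ℝ (ℝ × ℝ) ℝ))
        + dAp ψ eet (p, t₀) •
          (conjL.comp ((fderiv ℝ (dAp ψ ee2) (p, t₀)).comp
            (ContinuousLinearMap.inl ℝ (ℝ × ℝ) ℝ))) with hGc'def
    have hFcd : ∀ p : ℝ × ℝ, ((p, t₀) : (ℝ × ℝ) × ℝ) ∈ U → HasFDerivAt Fc (Fc' p) p := by
      intro p hz
      have h1 := hsliceF _ (contDiffOn_dAp hU hps ee1) p hz
      have ht' := hsliceF _ (contDiffOn_dAp hU hps eet) p hz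
      have hc : HasFDerivAt (fun q => star (dAp ψ ee1 (q, t₀)))
          (conjL.comp ((fderiv ℝ (dAp ψ ee1) (p, t₀)).comp
            (ContinuousLinearMap.inl ℝ (ℝ × ℝ) ℝ))) p := h1.star
      exact hc.mul ht'
    have hGcd : ∀ p : ℝ × ℝ, ((p, t₀) : (ℝ × ℝ) × ℝ) ∈ U → HasFDerivAt Gc (Gc' p) p := by
      intro p hz
      have h2 := hsliceF _ (contDiffOn_dAp hU hps ee2) p hz
      have ht' := hsliceF _ (contDiffOn_dAp hU hps eet) p hz
      have hc : HasFDerivAt (fun q => star (dAp ψ ee2 (q, t₀)))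
          (conjL.comp ((fderiv ℝ (dAp ψ ee2) (p, t₀)).comp
            (ContinuousLinearMap.inl ℝ (ℝ × ℝ) ℝ))) p := h2.star
      exact hc.mul ht'
    -- continuity of slices on R
    have hcsl : ∀ f : (ℝ × ℝ) × ℝ → ℂ, ContDiffOn ℝ ∞ f U →
        ContinuousOn (fun p => f (p, t₀)) R := fun f hf =>
      (hf.continuousOn.mono hKU).comp ((continuous_id.prodMk continuous_const).continuousOn)
        (fun p (hp : p ∈ R) => ⟨hp, ht₀I⟩)
    have hcFc : ContinuousOn Fc R :=
      (hcsl _ (contDiffOn_dAp hU hps ee1)).star.mul (hcsl _ (contDiffOn_dAp hU hps eet))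
    have hcGc : ContinuousOn Gc R :=
      (hcsl _ (contDiffOn_dAp hU hps ee2)).star.mul (hcsl _ (contDiffOn_dAp hU hps eet))
    -- the divergence integrand
    set Hfun : ℝ × ℝ → ℂ := fun p =>
      ((starRingEnd ℂ) (dAp ψ ee1 (p, t₀)) * dAp (dAp ψ eet) ee1 (p, t₀)
        + dAp ψ eet (p, t₀) * (starRingEnd ℂ) (dAp (dAp ψ ee1) ee1 (p, t₀)))
      + ((starRingEnd ℂ) (dAp ψ ee2 (p, t₀)) * dAp (dAp ψ eet) ee2 (p, t₀)
        + dAp ψ eet (p, t₀) * (starRingEnd ℂ) (dAp (dAp ψ ee2) ee2 (p, t₀))) with hHfundef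
    have hsum : ∀ p : ℝ × ℝ, Fc' p (1, 0) + Gc' p (0, 1) = Hfun p := by
      intro p
      rw [hFc'def, hGc'def, hHfundef]
      simp [dAp, hconjLa, smul_eq_mul, mul_comm]
    have hHcont : ContinuousOn Hfun R := by
      rw [hHfundef]
      exact (((hcsl _ (contDiffOn_dAp hU hps ee1)).star.mul
          (hcsl _ (contDiffOn_dAp hU (contDiffOn_dAp hU hps eet) ee1))).add
        ((hcsl _ (contDiffOn_dAp hU hps eet)).mul
          (hcsl _ (contDiffOn_dAp hU (contDiffOn_dAp hU hps ee1) ee1)).star)).add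
        (((hcsl _ (contDiffOn_dAp hU hps ee2)).star.mul
          (hcsl _ (contDiffOn_dAp hU (contDiffOn_dAp hU hps eet) ee2))).add
        ((hcsl _ (contDiffOn_dAp hU hps eet)).mul
          (hcsl _ (contDiffOn_dAp hU (contDiffOn_dAp hU hps ee2) ee2)).star))
    have hHint : IntegrableOn Hfun R := hHcont.integrableOn_compact hRcomp
    have hle : ((a, c) : ℝ × ℝ) ≤ (b, d) := ⟨hab.le, hcd.le⟩
    have hIcc : (Icc ((a, c) : ℝ × ℝ) ((b, d) : ℝ × ℝ)) = R := by
      rw [Icc_prod_eq]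
    have hdiv := integral_divergence_prod_Icc_of_hasFDerivAt_off_countable_of_le
      Fc Gc Fc' Gc' (a, c) (b, d) hle ∅ countable_empty
      (by rw [hIcc]; exact hcFc) (by rw [hIcc]; exact hcGc)
      (fun x hx => hFcd x (hmem x (interior_subset (s := R)
        (show x ∈ interior R by rw [hintR]; exact hx.1))))
      (fun x hx => hGcd x (hmem x (interior_subset (s := R)
        (show x ∈ interior R by rw [hintR]; exact hx.1))))
      (by
        rw [hIcc]
        have hfe : (fun x => Fc' x (1, 0) + Gc' x (0, 1)) = Hfun := funext hsum
        rw [hfe]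
        exact hHint)
    rw [hIcc] at hdiv
    -- boundary terms vanish
    have hb1 : (∫ x in a..b, Gc (x, d)) = 0 := by
      have h0 : EqOn (fun x => Gc (x, d)) (fun _ => (0:ℂ)) (uIcc a b) := by
        intro x hx
        rw [uIcc_of_le hab.le] at hx
        have hfr' := hfr (x, d) ⟨hx, right_mem_Icc.2 hcd.le⟩ (Or.inr (Or.inr (Or.inr rfl)))
        simp [hGcdef, hbdt _ hfr']
      rw [intervalIntegral.integral_congr h0]
      simp
    have hb2 : (∫ x in a..b, Gc (x, c)) = 0 := by
      have h0 : EqOn (fun x => Gc (x, c)) (fun _ => (0:ℂ)) (uIcc a b) := by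
        intro x hx
        rw [uIcc_of_le hab.le] at hx
        have hfr' := hfr (x, c) ⟨hx, left_mem_Icc.2 hcd.le⟩ (Or.inr (Or.inr (Or.inl rfl)))
        simp [hGcdef, hbdt _ hfr']
      rw [intervalIntegral.integral_congr h0]
      simp
    have hb3 : (∫ y in c..d, Fc (b, y)) = 0 := by
      have h0 : EqOn (fun y => Fc (b, y)) (fun _ => (0:ℂ)) (uIcc c d) := by
        intro y hy
        rw [uIcc_of_le hcd.le] at hy
        have hfr' := hfr (b, y) ⟨right_mem_Icc.2 hab.le, hy⟩ (Or.inr (Or.inl rfl))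
        simp [hFcdef, hbdt _ hfr']
      rw [intervalIntegral.integral_congr h0]
      simp
    have hb4 : (∫ y in c..d, Fc (a, y)) = 0 := by
      have h0 : EqOn (fun y => Fc (a, y)) (fun _ => (0:ℂ)) (uIcc c d) := by
        intro y hy
        rw [uIcc_of_le hcd.le] at hy
        have hfr' := hfr (a, y) ⟨left_mem_Icc.2 hab.le, hy⟩ (Or.inl rfl)
        simp [hFcdef, hbdt _ hfr']
      rw [intervalIntegral.integral_congr h0]
      simp
    rw [hb1, hb2, hb3, hb4] at hdiv
    simp only [sub_zero, add_zero, zero_sub, zero_add, sub_self] at hdiv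
    have hHzero : (∫ p in R, Hfun p) = 0 := by
      have hfe : (fun x => Fc' x (1, 0) + Gc' x (0, 1)) = Hfun := funext hsum
      rw [← hfe]
      simpa using hdiv
    -- pointwise identity : Gtfun is the real part of Hfun
    have hpt : ∀ p ∈ R, Gtfun V β ψ (p, t₀) = (Hfun p).re := by
      intro p hp
      have hz := hmem p hp
      have hs1 : fderiv ℝ (dAp ψ eet) (p, t₀) ee1 = fderiv ℝ (dAp ψ ee1) (p, t₀) eet :=
        dAp2_symm hU hps hz ee1 eet
      have hs2 : fderiv ℝ (dAp ψ eet) (p, t₀) ee2 = fderiv ℝ (dAp ψ ee2) (p, t₀) eet :=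
        dAp2_symm hU hps hz ee2 eet
      have key := hpde p hp
      have key2 : dAp (dAp ψ ee1) ee1 (p, t₀) + dAp (dAp ψ ee2) ee2 (p, t₀)
          = 2 * (V p : ℂ) * ψ (p, t₀) + 2 * (β : ℂ) * (‖ψ (p, t₀)‖ ^ 2 : ℝ) * ψ (p, t₀)
            - 2 * Complex.I * dAp ψ eet (p, t₀) := by linear_combination -2 * key
      simp only [dAp] at key2
      have hre := congrArg Complex.re key2
      have him := congrArg Complex.im key2
      simp only [Complex.add_re, Complex.mul_re, Complex.mul_im, Complex.add_im,
        Complex.sub_re, Complex.sub_im, Complex.I_re, Complex.I_im, Complex.ofReal_re,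
        Complex.ofReal_im, Complex.re_ofNat, Complex.im_ofNat] at hre him
      rw [hHfundef]
      unfold Gtfun
      simp only [dAp]
      rw [hs1, hs2]
      simp only [Complex.star_def, Complex.add_re, Complex.mul_re,
        Complex.conj_re, Complex.conj_im]
      ring_nf
      ring_nf at hre him
      linear_combination (-(fderiv ℝ ψ (p, t₀) eet).re) * hre + (-(fderiv ℝ ψ (p, t₀) eet).im) * him
    calc (∫ p in R, Gtfun V β ψ (p, t₀)) = ∫ p in R, (Hfun p).re :=
          setIntegral_congr_fun hRmeas (fun p hp => hpt p hp)
      _ = (∫ p in R, Hfun p).re := by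
          have h := integral_re (μ := volume.restrict R) (f := Hfun) hHint
          simpa using h
      _ = 0 := by rw [hHzero]; simp
  -- Step 6 : conclude
  have hdiffI : DifferentiableOn ℝ E' (interior (Icc 0 T)) := by
    rw [interior_Icc]
    exact fun x hx => ((hE'deriv x hx).differentiableAt).differentiableWithinAt
  have hd0 : ∀ x ∈ interior (Icc (0:ℝ) T), deriv E' x = 0 := by
    rw [interior_Icc]
    intro x hx
    rw [(hE'deriv x hx).deriv, hIBP x hx]
  have hmono := monotoneOn_of_deriv_nonneg (convex_Icc 0 T) hE'cont hdiffI
    (fun x hx => by rw [hd0 x hx])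
  have hanti := antitoneOn_of_deriv_nonpos (convex_Icc 0 T) hE'cont hdiffI
    (fun x hx => by rw [hd0 x hx])
  intro t ht
  have h0T : (0:ℝ) ∈ Icc (0:ℝ) T := ⟨le_rfl, hT.le⟩
  rw [hgp t ht, hgp 0 h0T]
  exact le_antisymm (hanti h0T ht ht.1) (hmono h0T ht ht.1)
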